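/- arXiv:2211.05179 — 4 statements merged into one kernel-verified Lean document; each statement's English description precedes it below -/
import Mathlib

section
/- With the setup of the SCF iteration as above, if f(x_{k+1}) = f(x_k), then x_k is itself an eigenvector of H(x_k) corresponding to its largest eigenvalue. -/
/-!
Summing the tangent-line inequalities `φᵢ b - φᵢ a ≥ hᵢ a * (b - a)` of the convex `φᵢ` gives
`yᴴ H(x) y - xᴴ H(x) x ≤ f y - f x`. For `x = x_k`, `y = x_{k+1}` the left side is
`λ - xᴴ H(x) x` and the right side vanishes, so the Rayleigh quotient of the unit vector `x_k`
reaches the largest eigenvalue `λ`. Since `λ • 1 - H(x_k)` is positive semidefinite and its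
quadratic form vanishes at `x_k`, it kills `x_k`.
-/

open Matrix BigOperators

/-- The SCF coefficient matrix `H(x) = ∑ i, h_i(xᴴ A_i x) • A_i`. -/
noncomputable def Hmat {n m : ℕ} (A : Fin m → Matrix (Fin n) (Fin n) ℂ)
    (h : Fin m → ℝ → ℝ) (x : Fin n → ℂ) : Matrix (Fin n) (Fin n) ℂ :=
  ∑ i, (h i ((star x ⬝ᵥ (A i).mulVec x).re) : ℂ) • A i

theorem ConvexOn.deriv_mul_sub_le {S : Set ℝ} {f : ℝ → ℝ} {x y : ℝ} (hfc : ConvexOn ℝ S f)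
    (hx : x ∈ S) (hy : y ∈ S) (hfd : DifferentiableAt ℝ f x) :
    deriv f x * (y - x) ≤ f y - f x := by
  rcases lt_trichotomy x y with hxy | rfl | hyx
  · have h := hfc.deriv_le_slope hx hy hxy hfd
    rwa [slope_def_field, le_div_iff₀ (sub_pos.2 hxy)] at h
  · simp
  · have h := hfc.slope_le_deriv hy hx hyx hfd
    rw [slope_def_field, div_le_iff₀ (sub_pos.2 hyx)] at h
    linarith

namespace Matrix.IsHermitian

variable {𝕜 ι : Type*} [RCLike 𝕜] [Fintype ι] [DecidableEq ι] {B : Matrix ι ι 𝕜}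

theorem exists_mulVec_eq_smul_of_mem_spectrum_real (hB : B.IsHermitian) {μ : ℝ}
    (hμ : μ ∈ spectrum ℝ B) : ∃ v ≠ 0, B *ᵥ v = (μ : 𝕜) • v := by
  obtain ⟨i, rfl⟩ := hB.spectrum_real_eq_range_eigenvalues ▸ hμ
  refine ⟨hB.eigenvectorBasis i, ?_, ?_⟩
  · simpa using hB.eigenvectorBasis.orthonormal.ne_zero i
  · rw [hB.mulVec_eigenvectorBasis, RCLike.real_smul_eq_coe_smul (K := 𝕜)]

open scoped MatrixOrder ComplexOrder in
theorem mulVec_eq_smul_of_le_re_dotProduct_mulVec (hB : B.IsHermitian) {lam : ℝ}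
    (hspec : ∀ μ ∈ spectrum ℝ B, μ ≤ lam) {x : ι → 𝕜} (hx : star x ⬝ᵥ x = 1)
    (hlam : lam ≤ RCLike.re (star x ⬝ᵥ B *ᵥ x)) : B *ᵥ x = (lam : 𝕜) • x := by
  have hpsd : (algebraMap ℝ _ lam - B).PosSemidef :=
    le_algebraMap_of_spectrum_le hspec hB.isSelfAdjoint
  have hform : star x ⬝ᵥ (algebraMap ℝ _ lam - B) *ᵥ x = lam - star x ⬝ᵥ B *ᵥ x := by
    simp [Algebra.algebraMap_eq_smul_one, sub_mulVec, smul_mulVec, dotProduct_sub, hx]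
  have hzero : star x ⬝ᵥ (algebraMap ℝ _ lam - B) *ᵥ x = 0 := by
    refine le_antisymm (RCLike.le_iff_re_im.2 ⟨?_, ?_⟩) (hpsd.dotProduct_mulVec_nonneg x)
    · simpa [hform] using hlam
    · simpa using (RCLike.nonneg_iff.1 (hpsd.dotProduct_mulVec_nonneg x)).2
  have hker := (hpsd.dotProduct_mulVec_zero_iff x).1 hzero
  rw [sub_mulVec, sub_eq_zero, Algebra.algebraMap_eq_smul_one, smul_mulVec, one_mulVec] at hker
  rw [← hker, RCLike.real_smul_eq_coe_smul (K := 𝕜)]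

end Matrix.IsHermitian

section Hmat

variable {n m : ℕ} (A : Fin m → Matrix (Fin n) (Fin n) ℂ) (h : Fin m → ℝ → ℝ)

theorem isHermitian_Hmat (hA : ∀ i, (A i).IsHermitian) (x : Fin n → ℂ) :
    (Hmat A h x).IsHermitian :=
  isSelfAdjoint_sum _ fun i _ =>
    IsSelfAdjoint.smul (Complex.conj_ofReal _) (hA i).isSelfAdjoint

theorem re_dotProduct_Hmat_mulVec (x y : Fin n → ℂ) :
    (star y ⬝ᵥ Hmat A h x *ᵥ y).re =
      ∑ i, h i (star x ⬝ᵥ A i *ᵥ x).re * (star y ⬝ᵥ A i *ᵥ y).re := by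
  simp [Hmat, sum_mulVec, dotProduct_sum, smul_mulVec, Complex.re_sum]

theorem re_dotProduct_Hmat_mulVec_sub_le (φ : Fin m → ℝ → ℝ)
    (hconv : ∀ i, ConvexOn ℝ Set.univ (φ i)) (hdiff : ∀ i, Differentiable ℝ (φ i))
    (hder : ∀ i t, deriv (φ i) t = h i t) (x y : Fin n → ℂ) :
    (star y ⬝ᵥ Hmat A h x *ᵥ y).re - (star x ⬝ᵥ Hmat A h x *ᵥ x).re ≤
      ∑ i, φ i (star y ⬝ᵥ A i *ᵥ y).re - ∑ i, φ i (star x ⬝ᵥ A i *ᵥ x).re := by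
  rw [re_dotProduct_Hmat_mulVec, re_dotProduct_Hmat_mulVec, ← Finset.sum_sub_distrib,
    ← Finset.sum_sub_distrib]
  refine Finset.sum_le_sum fun i _ => ?_
  rw [← mul_sub, ← hder]
  exact (hconv i).deriv_mul_sub_le trivial trivial (hdiff i _)

end Hmat

theorem stmt4 {n m : ℕ}
    (A : Fin m → Matrix (Fin n) (Fin n) ℂ) (hA : ∀ i, (A i).IsHermitian)
    (φ h : Fin m → ℝ → ℝ)
    (hconv : ∀ i, ConvexOn ℝ Set.univ (φ i))
    (hdiff : ∀ i, Differentiable ℝ (φ i))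
    (hder : ∀ i t, deriv (φ i) t = h i t)
    (xk xk1 : Fin n → ℂ)
    (hxk : star xk ⬝ᵥ xk = 1) (hxk1 : star xk1 ⬝ᵥ xk1 = 1)
    (lam : ℝ)
    (heig : (Hmat A h xk).mulVec xk1 = (lam : ℂ) • xk1)
    (hmax : ∀ (μ : ℝ) (y : Fin n → ℂ), y ≠ 0 →
        (Hmat A h xk).mulVec y = (μ : ℂ) • y → μ ≤ lam)
    (heq : ∑ i, φ i ((star xk1 ⬝ᵥ (A i).mulVec xk1).re) =
      ∑ i, φ i ((star xk ⬝ᵥ (A i).mulVec xk).re)) :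
    (Hmat A h xk).mulVec xk = (lam : ℂ) • xk := by
  have hB := isHermitian_Hmat A h hA xk
  have hlam : (star xk1 ⬝ᵥ Hmat A h xk *ᵥ xk1).re = lam := by
    simp [heig, hxk1]
  have hdescent := re_dotProduct_Hmat_mulVec_sub_le A h φ hconv hdiff hder xk xk1
  have hrayleigh : lam ≤ (star xk ⬝ᵥ Hmat A h xk *ᵥ xk).re := by linarith
  refine hB.mulVec_eq_smul_of_le_re_dotProduct_mulVec (fun μ hμ => ?_) hxk hrayleigh
  obtain ⟨v, hv0, hv⟩ := hB.exists_mulVec_eq_smul_of_mem_spectrum_real hμ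
  exact hmax μ v hv0 hv
end

section
/- Let x be a unit vector, H Hermitian with Hx = λx, and suppose d^H (H − λ I) d + 2 Σ_i h_i'(x^H A_i x)(Re(d^H A_i x))^2 ≤ 0 for all d with d^H x = 0, where h_i' ≥ 0. Then λ is the largest eigenvalue of H. -/
open Matrix BigOperators

theorem stmt7 {n m : ℕ}
    (A : Fin m → Matrix (Fin n) (Fin n) ℂ) (hA : ∀ i, (A i).IsHermitian)
    (H : Matrix (Fin n) (Fin n) ℂ) (hH : H.IsHermitian)
    (c : Fin m → ℝ) (hc : ∀ i, 0 ≤ c i)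
    (x : Fin n → ℂ) (hx : star x ⬝ᵥ x = 1)
    (lam : ℝ) (heig : H.mulVec x = (lam : ℂ) • x)
    (hphi : ∀ d : Fin n → ℂ, star d ⬝ᵥ x = 0 →
        (star d ⬝ᵥ H.mulVec d).re - lam * (star d ⬝ᵥ d).re
          + 2 * ∑ i, c i * ((star d ⬝ᵥ (A i).mulVec x).re) ^ 2 ≤ 0) :
    ∀ (μ : ℝ) (y : Fin n → ℂ), y ≠ 0 → H.mulVec y = (μ : ℂ) • y → μ ≤ lam := by
  intro μ y hy hμ
  set c0 : ℂ := star x ⬝ᵥ y with hc0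
  set d : Fin n → ℂ := y - c0 • x with hd
  have hdx : star d ⬝ᵥ x = 0 := by
    have h1 : star d ⬝ᵥ x = star y ⬝ᵥ x - (starRingEnd ℂ) c0 * (star x ⬝ᵥ x) := by
      simp [hd, sub_dotProduct, star_smul, smul_dotProduct, smul_eq_mul]
    have h2 : (starRingEnd ℂ) c0 = star y ⬝ᵥ x := by
      simp [hc0, dotProduct, map_sum, mul_comm]
    rw [h1, h2, hx, mul_one, sub_self]
  by_cases hd0 : d = 0
  · -- y = c0 • x, so μ = lam
    have hyx : y = c0 • x := by
      have := sub_eq_zero.mp hd0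
      exact this
    have hc0ne : c0 ≠ 0 := by
      intro h; apply hy; rw [hyx, h, zero_smul]
    have h1 : H.mulVec y = (lam : ℂ) • y := by
      rw [hyx, Matrix.mulVec_smul, heig, smul_comm]
    have h2 : (μ : ℂ) • y = (lam : ℂ) • y := by rw [← hμ, h1]
    have h3 : (μ : ℂ) = (lam : ℂ) := by
      have := sub_eq_zero.mpr h2
      rw [← sub_smul] at this
      rcases smul_eq_zero.mp this with h | h
      · exact sub_eq_zero.mp h
      · exact absurd h hy
    exact le_of_eq (by exact_mod_cast h3)
  · -- d ≠ 0
    have hHd : H.mulVec d = (μ : ℂ) • d + ((μ - lam : ℂ) * c0) • x := by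
      rw [hd, Matrix.mulVec_sub, Matrix.mulVec_smul, hμ, heig, smul_comm c0]
      ext j
      simp [smul_eq_mul]
      ring
    have hdHd : star d ⬝ᵥ H.mulVec d = (μ : ℂ) * (star d ⬝ᵥ d) := by
      rw [hHd, dotProduct_add, dotProduct_smul, dotProduct_smul, hdx, smul_zero,
        add_zero, smul_eq_mul]
    have hre : (star d ⬝ᵥ H.mulVec d).re = μ * (star d ⬝ᵥ d).re := by
      rw [hdHd, Complex.re_ofReal_mul]
    have hsum : 0 ≤ ∑ i, c i * ((star d ⬝ᵥ (A i).mulVec x).re) ^ 2 :=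
      Finset.sum_nonneg fun i _ => mul_nonneg (hc i) (sq_nonneg _)
    have key := hphi d hdx
    rw [hre] at key
    have hkey : (μ - lam) * (star d ⬝ᵥ d).re ≤ 0 := by nlinarith
    have hpos : 0 < (star d ⬝ᵥ d).re := by
      have heq : (star d ⬝ᵥ d).re = ∑ i, Complex.normSq (d i) := by
        simp [dotProduct, Complex.re_sum, Complex.normSq_apply, Complex.mul_re]
      rw [heq]
      obtain ⟨i, hi⟩ := Function.ne_iff.mp hd0
      exact Finset.sum_pos' (fun j _ => Complex.normSq_nonneg _)
        ⟨i, Finset.mem_univ i, Complex.normSq_pos.mpr hi⟩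
    nlinarith
end

section
/- For the quartic objective f(x) = (1/2) Σ_{i=1}^m (x^H A_i x)^2 with Hermitian A_i, every local maximizer x of f over the unit sphere of ℂ^n satisfies H(x)x = λx with H(x) = Σ_i (x^H A_i x) A_i and λ = λ_max(H(x)) = 2 f(x). -/
open Matrix BigOperators

/-- The quartic objective `f(x) = (1/2) ∑ i, (xᴴ A_i x)²`. -/
noncomputable def quartF {n m : ℕ} (A : Fin m → Matrix (Fin n) (Fin n) ℂ)
    (x : Fin n → ℂ) : ℝ :=
  (1 / 2) * ∑ i, ((star x ⬝ᵥ (A i).mulVec x).re) ^ 2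

/-- `H(x) = ∑ i, (xᴴ A_i x) • A_i`. -/
noncomputable def Hquart {n m : ℕ} (A : Fin m → Matrix (Fin n) (Fin n) ℂ)
    (x : Fin n → ℂ) : Matrix (Fin n) (Fin n) ℂ :=
  ∑ i, (((star x ⬝ᵥ (A i).mulVec x).re : ℝ) : ℂ) • A i

/-- Euclidean normalization of a vector in `ℂ^n`. -/
noncomputable def normz {n : ℕ} (y : Fin n → ℂ) : Fin n → ℂ :=
  ((Real.sqrt ((star y ⬝ᵥ y).re) : ℂ))⁻¹ • y

open Filter Topology
open scoped ComplexOrder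

/-!
Fix a tangent direction `u ⊥ x` and write `cᵢ = xᴴAᵢx`, `bᵢ = 2 Re uᴴAᵢx`, `eᵢ = uᴴAᵢu`. Since
`‖x + t u‖² = 1 + t²‖u‖²` and `f` is homogeneous of degree 4, local maximality says that the quartic
`2 f(x) (1 + t²‖u‖²)² - ∑ᵢ (cᵢ + t bᵢ + t² eᵢ)²` is nonnegative near `t = 0`. Its linear coefficient
must vanish, i.e. `Re uᴴH(x)x = 0`, and its quadratic one is nonnegative, giving
`uᴴH(x)u ≤ 2 f(x) ‖u‖²`. The first condition for all `u ⊥ x` forces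
`H(x)x = (xᴴH(x)x) x = 2 f(x) x`. An eigenvector of the Hermitian `H(x)` for another eigenvalue is orthogonal to `x`, so the second
condition bounds that eigenvalue by `2 f(x)`.
-/

namespace Matrix

variable {ι : Type*} [Fintype ι]

lemma re_star_dotProduct_self_nonneg (v : ι → ℂ) : 0 ≤ (star v ⬝ᵥ v).re :=
  (Complex.nonneg_iff.mp (dotProduct_star_self_nonneg v)).1

lemma re_star_dotProduct_self_pos {v : ι → ℂ} (hv : v ≠ 0) : 0 < (star v ⬝ᵥ v).re :=
  (Complex.pos_iff.mp (dotProduct_star_self_pos_iff.mpr hv)).1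

lemma re_star_dotProduct_self_eq_zero {v : ι → ℂ} : (star v ⬝ᵥ v).re = 0 ↔ v = 0 := by
  refine ⟨fun h => dotProduct_star_self_eq_zero.mp ?_, fun h => by simp [h]⟩
  exact Complex.ext h (Complex.nonneg_iff.mp (dotProduct_star_self_nonneg v)).2.symm

lemma IsHermitian.star_dotProduct_mulVec_comm {M : Matrix ι ι ℂ} (hM : M.IsHermitian)
    (u v : ι → ℂ) : star u ⬝ᵥ M *ᵥ v = star (star v ⬝ᵥ M *ᵥ u) := by
  rw [star_dotProduct, star_mulVec, hM.eq, dotProduct_mulVec]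

lemma IsHermitian.coe_re_star_dotProduct_mulVec_self {M : Matrix ι ι ℂ} (hM : M.IsHermitian)
    (v : ι → ℂ) : (((star v ⬝ᵥ M *ᵥ v).re : ℝ) : ℂ) = star v ⬝ᵥ M *ᵥ v :=
  Complex.ext rfl (by simpa using (hM.im_star_dotProduct_mulVec_self v).symm)

lemma IsHermitian.re_star_dotProduct_mulVec_add_smul {M : Matrix ι ι ℂ} (hM : M.IsHermitian)
    (x u : ι → ℂ) (t : ℝ) :
    (star (x + (t : ℂ) • u) ⬝ᵥ M *ᵥ (x + (t : ℂ) • u)).re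
      = (star x ⬝ᵥ M *ᵥ x).re + t * (2 * (star u ⬝ᵥ M *ᵥ x).re)
        + t ^ 2 * (star u ⬝ᵥ M *ᵥ u).re := by
  simp only [star_add, star_smul, add_dotProduct, dotProduct_add, mulVec_add, mulVec_smul,
    smul_dotProduct, dotProduct_smul, Complex.star_def, Complex.conj_ofReal, smul_eq_mul,
    hM.star_dotProduct_mulVec_comm x u, Complex.add_re, Complex.re_ofReal_mul, Complex.conj_re]
  ring

lemma IsHermitian.star_dotProduct_eq_zero_of_mulVec_eq_smul {M : Matrix ι ι ℂ}
    (hM : M.IsHermitian) {x y : ι → ℂ} {c : ℂ} {μ : ℝ} (hx : M *ᵥ x = c • x)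
    (hy : M *ᵥ y = (μ : ℂ) • y) (hne : (μ : ℂ) ≠ c) : star y ⬝ᵥ x = 0 := by
  have h : c * (star y ⬝ᵥ x) = μ * (star y ⬝ᵥ x) := by
    rw [← smul_eq_mul, ← dotProduct_smul, ← hx, hM.star_dotProduct_mulVec_comm, hy,
      dotProduct_smul, smul_eq_mul, star_mul', ← star_dotProduct, Complex.star_def,
      Complex.conj_ofReal]
  exact (mul_eq_zero.mp (by linear_combination h)).resolve_left (sub_ne_zero.mpr hne.symm)

lemma eq_star_dotProduct_smul_of_forall_re_eq_zero {x v : ι → ℂ} (hx : star x ⬝ᵥ x = 1)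
    (h : ∀ u, star u ⬝ᵥ x = 0 → (star u ⬝ᵥ v).re = 0) : v = (star x ⬝ᵥ v) • x := by
  set w := v - (star x ⬝ᵥ v) • x with hw
  have hxw : star x ⬝ᵥ w = 0 := by simp [hw, dotProduct_sub, hx]
  have hwx : star w ⬝ᵥ x = 0 := by rw [star_dotProduct, hxw, star_zero]
  have hww : star w ⬝ᵥ v = star w ⬝ᵥ w := by
    rw [hw, dotProduct_sub, dotProduct_smul, ← hw, hwx, smul_zero, sub_zero]
  exact sub_eq_zero.mp (re_star_dotProduct_self_eq_zero.mp (hww ▸ h w hwx))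

end Matrix

lemma eq_zero_and_nonneg_of_eventually_nonneg {a₁ a₂ a₃ a₄ : ℝ}
    (h : ∀ᶠ t in 𝓝 (0 : ℝ), 0 ≤ a₁ * t + a₂ * t ^ 2 + a₃ * t ^ 3 + a₄ * t ^ 4) :
    a₁ = 0 ∧ 0 ≤ a₂ := by
  have nonneg_at_zero : ∀ g : ℝ → ℝ, Continuous g → (∀ᶠ t in 𝓝[>] 0, 0 ≤ g t) → 0 ≤ g 0 :=
    fun g hg hev => ge_of_tendsto (hg.tendsto 0 |>.mono_left nhdsWithin_le_nhds) hev
  -- divide by `t`, resp. by `t²` after adding the values at `±t`, and let `t → 0⁺`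
  have hpos := h.filter_mono (nhdsWithin_le_nhds (s := Set.Ioi 0))
  have hneg := ((continuous_neg.tendsto' (0 : ℝ) 0 neg_zero).eventually h).filter_mono
    (nhdsWithin_le_nhds (s := Set.Ioi 0))
  have h₁ := nonneg_at_zero (fun t => a₁ + a₂ * t + a₃ * t ^ 2 + a₄ * t ^ 3) (by fun_prop) <| by
    filter_upwards [hpos, self_mem_nhdsWithin] with t ht (htpos : 0 < t)
    exact nonneg_of_mul_nonneg_right (by linear_combination ht) htpos
  have h₁' := nonneg_at_zero (fun t => -a₁ + a₂ * t - a₃ * t ^ 2 + a₄ * t ^ 3) (by fun_prop) <| by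
    filter_upwards [hneg, self_mem_nhdsWithin] with t ht (htpos : 0 < t)
    exact nonneg_of_mul_nonneg_right (by linear_combination ht) htpos
  have h₂ := nonneg_at_zero (fun t => a₂ + a₄ * t ^ 2) (by fun_prop) <| by
    filter_upwards [hpos, hneg, self_mem_nhdsWithin] with t ht ht' (htpos : 0 < t)
    exact nonneg_of_mul_nonneg_right (by linear_combination (ht + ht') / 2) (pow_pos htpos 2)
  norm_num at h₁ h₁' h₂
  exact ⟨by linarith, h₂⟩

lemma sum_sq_add_mul_add_sq_mul {ι : Type*} (s : Finset ι) (c b e : ι → ℝ) (t : ℝ) :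
    ∑ i ∈ s, (c i + t * b i + t ^ 2 * e i) ^ 2
      = ∑ i ∈ s, c i ^ 2 + t * (2 * ∑ i ∈ s, c i * b i)
        + t ^ 2 * (∑ i ∈ s, b i ^ 2 + 2 * ∑ i ∈ s, c i * e i)
        + t ^ 3 * (2 * ∑ i ∈ s, b i * e i) + t ^ 4 * ∑ i ∈ s, e i ^ 2 := by
  simp only [Finset.mul_sum, ← Finset.sum_add_distrib]
  exact Finset.sum_congr rfl fun i _ => by ring

def IsLocalMaxOnSphere {n : ℕ} (f : (Fin n → ℂ) → ℝ) (x : Fin n → ℂ) : Prop :=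
  ∃ ε > 0, ∀ d : Fin n → ℂ, star d ⬝ᵥ x = 0 →
    Real.sqrt ((star d ⬝ᵥ d).re) ≤ ε → f (normz (x + d)) ≤ f x

lemma IsLocalMaxOnSphere.eventually_le {n : ℕ} {f : (Fin n → ℂ) → ℝ} {x u : Fin n → ℂ}
    (hf : IsLocalMaxOnSphere f x) (hu : star u ⬝ᵥ x = 0) :
    ∀ᶠ t : ℝ in 𝓝 0, f (normz (x + (t : ℂ) • u)) ≤ f x := by
  obtain ⟨ε, hε, hmax⟩ := hf
  have hsmall : ∀ᶠ t : ℝ in 𝓝 0, t ^ 2 * (star u ⬝ᵥ u).re ≤ ε ^ 2 :=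
    (by fun_prop : Continuous fun t : ℝ => t ^ 2 * (star u ⬝ᵥ u).re).tendsto' 0 0 (by simp)
      |>.eventually (eventually_le_nhds (by positivity))
  filter_upwards [hsmall] with t ht
  refine hmax _ (by simp [star_smul, smul_dotProduct, hu]) ((Real.sqrt_le_left hε.le).mpr ?_)
  simpa [star_smul, smul_dotProduct, dotProduct_smul, Complex.star_def, ← mul_assoc, sq]
    using ht

section Quartic

variable {n m : ℕ} (A : Fin m → Matrix (Fin n) (Fin n) ℂ)

lemma quartF_ofReal_smul (c : ℝ) (y : Fin n → ℂ) :
    quartF A ((c : ℂ) • y) = c ^ 4 * quartF A y := by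
  simp only [quartF, star_smul, mulVec_smul, smul_dotProduct, dotProduct_smul, smul_eq_mul,
    Complex.star_def, Complex.conj_ofReal, ← mul_assoc, ← Complex.ofReal_mul,
    Complex.re_ofReal_mul, Finset.mul_sum]
  exact Finset.sum_congr rfl fun i _ => by ring

lemma quartF_normz (y : Fin n → ℂ) :
    quartF A (normz y) = quartF A y / (star y ⬝ᵥ y).re ^ 2 := by
  rw [normz, ← Complex.ofReal_inv, quartF_ofReal_smul, inv_pow,
    show 4 = 2 * 2 from rfl, pow_mul, Real.sq_sqrt (re_star_dotProduct_self_nonneg y),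
    inv_mul_eq_div]

lemma re_star_dotProduct_Hquart_mulVec (x u v : Fin n → ℂ) :
    (star u ⬝ᵥ Hquart A x *ᵥ v).re
      = ∑ i, (star x ⬝ᵥ A i *ᵥ x).re * (star u ⬝ᵥ A i *ᵥ v).re := by
  simp only [Hquart, sum_mulVec, dotProduct_sum, smul_mulVec, dotProduct_smul, smul_eq_mul,
    Complex.re_sum, Complex.re_ofReal_mul]

lemma re_star_dotProduct_Hquart_mulVec_self (x : Fin n → ℂ) :
    (star x ⬝ᵥ Hquart A x *ᵥ x).re = 2 * quartF A x := by
  simp only [re_star_dotProduct_Hquart_mulVec, quartF, sq]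
  ring

variable {A}

lemma isHermitian_Hquart (hA : ∀ i, (A i).IsHermitian) (x : Fin n → ℂ) :
    (Hquart A x).IsHermitian := by
  refine (conjTranspose_sum _ _).trans (Finset.sum_congr rfl fun i _ => ?_)
  rw [conjTranspose_smul, (hA i).eq, Complex.star_def, Complex.conj_ofReal]

theorem IsLocalMaxOnSphere.quartF_optimality_conditions (hA : ∀ i, (A i).IsHermitian)
    {x u : Fin n → ℂ} (hx : star x ⬝ᵥ x = 1) (hmax : IsLocalMaxOnSphere (quartF A) x)
    (hu : star u ⬝ᵥ x = 0) :
    (star u ⬝ᵥ Hquart A x *ᵥ x).re = 0 ∧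
      (star u ⬝ᵥ Hquart A x *ᵥ u).re ≤ 2 * quartF A x * (star u ⬝ᵥ u).re := by
  set c : Fin m → ℝ := fun i => (star x ⬝ᵥ A i *ᵥ x).re
  set b : Fin m → ℝ := fun i => 2 * (star u ⬝ᵥ A i *ᵥ x).re
  set e : Fin m → ℝ := fun i => (star u ⬝ᵥ A i *ᵥ u).re
  set ν := (star u ⬝ᵥ u).re
  have hquart : ∀ t : ℝ,
      2 * quartF A (x + (t : ℂ) • u) = ∑ i, (c i + t * b i + t ^ 2 * e i) ^ 2 :=
    fun t => by simp only [quartF, (hA _).re_star_dotProduct_mulVec_add_smul]; ring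
  have hnorm : ∀ t : ℝ, (star (x + (t : ℂ) • u) ⬝ᵥ (x + (t : ℂ) • u)).re = 1 + t ^ 2 * ν := by
    intro t
    simpa [hx, hu] using isHermitian_one.re_star_dotProduct_mulVec_add_smul x u t
  have hS : ∑ i, c i ^ 2 = 2 * quartF A x := by simp only [quartF]; ring
  have hcb : ∑ i, c i * b i = 2 * (star u ⬝ᵥ Hquart A x *ᵥ x).re := by
    rw [re_star_dotProduct_Hquart_mulVec, Finset.mul_sum]
    exact Finset.sum_congr rfl fun i _ => by ring
  have hce : ∑ i, c i * e i = (star u ⬝ᵥ Hquart A x *ᵥ u).re :=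
    (re_star_dotProduct_Hquart_mulVec A x u u).symm
  have hpoly : ∀ᶠ t in 𝓝 (0 : ℝ), 0 ≤ -(2 * ∑ i, c i * b i) * t
      + (2 * (∑ i, c i ^ 2) * ν - (∑ i, b i ^ 2 + 2 * ∑ i, c i * e i)) * t ^ 2
      + -(2 * ∑ i, b i * e i) * t ^ 3 + ((∑ i, c i ^ 2) * ν ^ 2 - ∑ i, e i ^ 2) * t ^ 4 := by
    filter_upwards [hmax.eventually_le hu] with t ht
    have hN : 0 < 1 + t ^ 2 * ν := add_pos_of_pos_of_nonneg one_pos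
      (mul_nonneg (sq_nonneg t) (re_star_dotProduct_self_nonneg u))
    rw [quartF_normz, hnorm, div_le_iff₀ (pow_pos hN 2)] at ht
    linear_combination 2 * ht - hS * (1 + t ^ 2 * ν) ^ 2 - hquart t
      - sum_sq_add_mul_add_sq_mul Finset.univ c b e t
  obtain ⟨h₁, h₂⟩ := eq_zero_and_nonneg_of_eventually_nonneg hpoly
  rw [hS, hce] at h₂
  have hb : 0 ≤ ∑ i, b i ^ 2 := Finset.sum_nonneg fun i _ => sq_nonneg _
  constructor <;> linarith

theorem stmt8 {n m : ℕ}
    (A : Fin m → Matrix (Fin n) (Fin n) ℂ) (hA : ∀ i, (A i).IsHermitian)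
    (x : Fin n → ℂ) (hx : star x ⬝ᵥ x = 1)
    (hmax : ∃ ε > 0, ∀ d : Fin n → ℂ, star d ⬝ᵥ x = 0 →
        Real.sqrt ((star d ⬝ᵥ d).re) ≤ ε →
        quartF A (normz (x + d)) ≤ quartF A x) :
    ∃ lam : ℝ, (Hquart A x).mulVec x = (lam : ℂ) • x ∧
      (∀ (μ : ℝ) (y : Fin n → ℂ), y ≠ 0 →
        (Hquart A x).mulVec y = (μ : ℂ) • y → μ ≤ lam) ∧
      lam = 2 * quartF A x := by
  have hmax : IsLocalMaxOnSphere (quartF A) x := hmax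
  have hH := isHermitian_Hquart hA x
  have hHx : Hquart A x *ᵥ x = ((2 * quartF A x : ℝ) : ℂ) • x := by
    rw [← re_star_dotProduct_Hquart_mulVec_self, hH.coe_re_star_dotProduct_mulVec_self]
    exact eq_star_dotProduct_smul_of_forall_re_eq_zero hx fun u hu =>
      (hmax.quartF_optimality_conditions hA hx hu).1
  refine ⟨2 * quartF A x, hHx, fun μ y hy hHy => ?_, rfl⟩
  rcases eq_or_ne μ (2 * quartF A x) with rfl | hne
  · exact le_rfl
  have hyx : star y ⬝ᵥ x = 0 :=
    hH.star_dotProduct_eq_zero_of_mulVec_eq_smul hHx hHy (by exact_mod_cast hne)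
  have hle := (hmax.quartF_optimality_conditions hA hx hyx).2
  rw [hHy, dotProduct_smul, smul_eq_mul, Complex.re_ofReal_mul] at hle
  exact le_of_mul_le_mul_right hle (re_star_dotProduct_self_pos hy)
end Quartic
end

section
/- Let A be an n×n Hermitian matrix and x a unit vector that is a local maximizer of the Rayleigh quotient x ↦ x^H A x over the unit sphere of ℂ^n. Then x is an eigenvector of A corresponding to its largest eigenvalue. -/
open Matrix Filter Topology Metric WithLp

/-!
View `A` as a self-adjoint operator `T` on `EuclideanSpace ℂ (Fin n)`. The first-order condition
for a constrained extremum (`IsSelfAdjoint.eq_smul_self_of_isLocalExtrOn`) already makes `x` an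
eigenvector, with eigenvalue `λ = re ⟪T x, x⟫`. If `T y = μ y` with `μ > λ`,
then since `x` is a `λ`-eigenvector the defect `re ⟪T v, v⟫ - λ ‖v‖²` is additive along `x + v`,
so at `v = t y` it equals `(μ - λ) t² ‖y‖² > 0`. Normalising `x + t y` therefore produces unit
vectors arbitrarily close to `x` with a strictly larger value than at `x`.
-/

theorem Metric.tendsto_smul_inv_norm_nhdsWithin_sphere {𝕜 E α : Type*} [RCLike 𝕜]
    [NormedAddCommGroup E] [NormedSpace 𝕜 E] [TopologicalSpace α] {f : α → E} {a : α}
    (hf : ContinuousAt f a) (ha : ‖f a‖ = 1) :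
    Tendsto (fun t ↦ ((‖f t‖⁻¹ : ℝ) : 𝕜) • f t) (𝓝 a) (𝓝[sphere 0 1] (f a)) := by
  have hne : ∀ᶠ t in 𝓝 a, f t ≠ 0 := hf.eventually_ne (norm_ne_zero_iff.mp (by simp [ha]))
  refine tendsto_nhdsWithin_iff.mpr ⟨?_, hne.mono fun t ht ↦ by simp [norm_smul, ht]⟩
  have hcont : ContinuousAt (fun t ↦ ((‖f t‖⁻¹ : ℝ) : 𝕜) • f t) a :=
    (RCLike.continuous_ofReal.continuousAt.comp (hf.norm.inv₀ (by simp [ha]))).smul hf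
  simpa [ha] using hcont.tendsto

variable {𝕜 E : Type*} [RCLike 𝕜] [NormedAddCommGroup E] [InnerProductSpace 𝕜 E]
  {T : E →L[𝕜] E}

theorem ContinuousLinearMap.reApplyInnerSelf_of_eq_smul {x : E} {lam : ℝ}
    (hx : T x = (lam : 𝕜) • x) : T.reApplyInnerSelf x = lam * ‖x‖ ^ 2 := by
  rw [T.reApplyInnerSelf_apply, hx, inner_smul_left, inner_self_eq_norm_sq_to_K,
    RCLike.conj_ofReal]
  norm_cast

namespace LinearMap.IsSymmetric

theorem reApplyInnerSelf_add_sub_of_eq_smul (hT : (T : E →ₗ[𝕜] E).IsSymmetric) {x : E}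
    {lam : ℝ} (hx : T x = (lam : 𝕜) • x) (v : E) :
    T.reApplyInnerSelf (x + v) - lam * ‖x + v‖ ^ 2 =
      (T.reApplyInnerSelf x - lam * ‖x‖ ^ 2) + (T.reApplyInnerSelf v - lam * ‖v‖ ^ 2) := by
  have hvx : inner 𝕜 (T v) x = lam * inner 𝕜 v x := by
    rw [← ContinuousLinearMap.coe_coe, hT v x, ContinuousLinearMap.coe_coe, hx, inner_smul_right]
  simp only [T.reApplyInnerSelf_apply, map_add, inner_add_left, inner_add_right, hvx, hx,
    inner_smul_left, RCLike.conj_ofReal, RCLike.re_ofReal_mul, norm_add_sq (𝕜 := 𝕜)]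
  rw [← inner_conj_symm x v, RCLike.conj_re]
  ring

theorem lt_rayleighQuotient_add (hT : (T : E →ₗ[𝕜] E).IsSymmetric) {x v : E} {lam μ : ℝ}
    (hx : T x = (lam : 𝕜) • x) (hv : T v = (μ : 𝕜) • v) (hv0 : v ≠ 0) (hlt : lam < μ)
    (hxv : x + v ≠ 0) : lam < T.rayleighQuotient (x + v) := by
  have hgap := hT.reApplyInnerSelf_add_sub_of_eq_smul hx v
  rw [T.reApplyInnerSelf_of_eq_smul hx, T.reApplyInnerSelf_of_eq_smul hv, sub_self, zero_add,
    ← sub_mul] at hgap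
  have hpos : 0 < (μ - lam) * ‖v‖ ^ 2 := by positivity
  rw [ContinuousLinearMap.rayleighQuotient, lt_div_iff₀ (by positivity)]
  linarith

theorem le_of_isLocalMaxOn_sphere (hT : (T : E →ₗ[𝕜] E).IsSymmetric) {x y : E} {lam μ : ℝ}
    (hx1 : ‖x‖ = 1) (hmax : IsLocalMaxOn T.reApplyInnerSelf (sphere 0 1) x)
    (hx : T x = (lam : 𝕜) • x) (hy : T y = (μ : 𝕜) • y) (hy0 : y ≠ 0) : μ ≤ lam := by
  by_contra! hlt
  set p : ℝ → E := fun t ↦ x + (t : 𝕜) • y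
  have hp : ContinuousAt p 0 := by fun_prop
  have hp0 : p 0 = x := by simp [p]
  have hq := tendsto_smul_inv_norm_nhdsWithin_sphere (𝕜 := 𝕜) hp (by rw [hp0, hx1])
  rw [hp0] at hq
  have hp_ne : ∀ᶠ t in 𝓝 (0 : ℝ), p t ≠ 0 :=
    hp.eventually_ne (by rw [hp0]; exact norm_ne_zero_iff.mp (by simp [hx1]))
  have hfalse : ∀ᶠ t in 𝓝[≠] (0 : ℝ), False := by
    filter_upwards [self_mem_nhdsWithin, nhdsWithin_le_nhds hp_ne,
      nhdsWithin_le_nhds (hq.eventually hmax)] with t ht0 hpt hle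
    have hgt := hT.lt_rayleighQuotient_add hx (v := (t : 𝕜) • y)
      (by rw [map_smul, hy, smul_comm]) (smul_ne_zero (by exact_mod_cast ht0) hy0) hlt hpt
    have hnormalize :
        T.rayleighQuotient (p t) = T.reApplyInnerSelf (((‖p t‖⁻¹ : ℝ) : 𝕜) • p t) := by
      rw [← T.rayleigh_smul (p t) (c := ((‖p t‖⁻¹ : ℝ) : 𝕜)) (by simpa using hpt),
        ContinuousLinearMap.rayleighQuotient, norm_smul]
      simp [hpt]
    rw [T.reApplyInnerSelf_of_eq_smul hx, hx1] at hle
    linarith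
  obtain ⟨_, h⟩ := hfalse.exists
  exact h

theorem eq_reApplyInnerSelf_smul_of_isLocalMaxOn_sphere [CompleteSpace E]
    (hT : (T : E →ₗ[𝕜] E).IsSymmetric) {x : E} (hx1 : ‖x‖ = 1)
    (hmax : IsLocalMaxOn T.reApplyInnerSelf (sphere 0 1) x) :
    T x = (T.reApplyInnerSelf x : 𝕜) • x := by
  have := hT.isSelfAdjoint.eq_smul_self_of_isLocalExtrOn (x₀ := x) (hx1 ▸ Or.inr hmax)
  rwa [ContinuousLinearMap.rayleighQuotient, hx1, one_pow, div_one] at this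

end LinearMap.IsSymmetric
namespace Matrix

variable {𝕜 ι : Type*} [RCLike 𝕜] [Fintype ι]

theorem star_dotProduct_self_eq_norm_sq (v : ι → 𝕜) :
    star v ⬝ᵥ v = ((‖toLp 2 v‖ ^ 2 : ℝ) : 𝕜) := by
  rw [dotProduct_comm, ← EuclideanSpace.inner_toLp_toLp, inner_self_eq_norm_sq_to_K]
  norm_cast

theorem star_dotProduct_self_eq_one_iff (v : ι → 𝕜) : star v ⬝ᵥ v = 1 ↔ ‖toLp 2 v‖ = 1 := by
  rw [star_dotProduct_self_eq_norm_sq, ← RCLike.ofReal_one, RCLike.ofReal_inj,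
    pow_eq_one_iff_of_nonneg (norm_nonneg _) two_ne_zero]

variable [DecidableEq ι]

theorem reApplyInnerSelf_toEuclideanCLM_toLp (A : Matrix ι ι 𝕜) (v : ι → 𝕜) :
    (toEuclideanCLM (𝕜 := 𝕜) A).reApplyInnerSelf (toLp 2 v) = RCLike.re (star v ⬝ᵥ A *ᵥ v) := by
  rw [ContinuousLinearMap.reApplyInnerSelf_apply, toEuclideanCLM_toLp,
    EuclideanSpace.inner_toLp_toLp, dotProduct_comm, star_dotProduct (A *ᵥ v), RCLike.star_def,
    RCLike.conj_re]

theorem IsHermitian.isSymmetric_toEuclideanCLM {A : Matrix ι ι 𝕜} (hA : A.IsHermitian) :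
    (toEuclideanCLM (𝕜 := 𝕜) A : EuclideanSpace 𝕜 ι →ₗ[𝕜] EuclideanSpace 𝕜 ι).IsSymmetric := by
  rw [coe_toEuclideanCLM_eq_toEuclideanLin]
  exact isSymmetric_toEuclideanLin_iff.mpr hA

theorem isLocalMaxOn_reApplyInnerSelf_toEuclideanCLM {A : Matrix ι ι 𝕜} {x : ι → 𝕜}
    (hloc : ∃ ε > 0, ∀ y : ι → 𝕜, star y ⬝ᵥ y = 1 →
        √(RCLike.re (star (y - x) ⬝ᵥ (y - x))) ≤ ε →
        RCLike.re (star y ⬝ᵥ A *ᵥ y) ≤ RCLike.re (star x ⬝ᵥ A *ᵥ x)) :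
    IsLocalMaxOn (toEuclideanCLM (𝕜 := 𝕜) A).reApplyInnerSelf (sphere 0 1) (toLp 2 x) := by
  obtain ⟨ε, hε, hle⟩ := hloc
  filter_upwards [nhdsWithin_le_nhds (closedBall_mem_nhds _ hε), self_mem_nhdsWithin]
    with y hyx hy1
  rw [← toLp_ofLp 2 y, reApplyInnerSelf_toEuclideanCLM_toLp, reApplyInnerSelf_toEuclideanCLM_toLp]
  refine hle (ofLp y) ?_ ?_
  · rwa [star_dotProduct_self_eq_one_iff, toLp_ofLp, ← mem_sphere_zero_iff_norm]
  · rwa [star_dotProduct_self_eq_norm_sq, RCLike.ofReal_re, Real.sqrt_sq (norm_nonneg _),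
      toLp_sub, toLp_ofLp, ← dist_eq_norm]

end Matrix

theorem stmt18 {n : ℕ} (A : Matrix (Fin n) (Fin n) ℂ) (hA : A.IsHermitian)
    (x : Fin n → ℂ) (hx : star x ⬝ᵥ x = 1)
    (hloc : ∃ ε > 0, ∀ y : Fin n → ℂ, star y ⬝ᵥ y = 1 →
        Real.sqrt ((star (y - x) ⬝ᵥ (y - x)).re) ≤ ε →
        (star y ⬝ᵥ A.mulVec y).re ≤ (star x ⬝ᵥ A.mulVec x).re) :
    ∃ lam : ℝ, A.mulVec x = (lam : ℂ) • x ∧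
      ∀ (μ : ℝ) (y : Fin n → ℂ), y ≠ 0 → A.mulVec y = (μ : ℂ) • y → μ ≤ lam := by
  set T := toEuclideanCLM (𝕜 := ℂ) A
  have hT := hA.isSymmetric_toEuclideanCLM
  have hx1 := (star_dotProduct_self_eq_one_iff x).mp hx
  have hmax := isLocalMaxOn_reApplyInnerSelf_toEuclideanCLM hloc
  have heig := hT.eq_reApplyInnerSelf_smul_of_isLocalMaxOn_sphere hx1 hmax
  refine ⟨T.reApplyInnerSelf (toLp 2 x), congrArg ofLp heig, fun μ y hy0 hy ↦ ?_⟩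
  exact hT.le_of_isLocalMaxOn_sphere hx1 hmax heig
    (by rw [toEuclideanCLM_toLp, hy]; rfl) (by simpa using hy0)
end
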